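/- arXiv:1810.00297 — 4 statements merged into one kernel-verified Lean document; each statement's English description precedes it below -/
import Mathlib

section
/- Let μ ∈ P(H) have bounded moments of degree p (i.e. ∫_H ‖u‖^p μ(du) < ∞) for some p ≥ 1, and let Ψ : H → ℝ be measurable and satisfy Assumption 1(a) and Assumption 1(b) with exponent q ≤ p. Then the normalizing constant Z = ∫_H exp(−Ψ(u)) μ(du) is strictly positive and finite, so the measure ν defined by dν/dμ = Z⁻¹ exp(−Ψ) is a well-defined probability measure on H. -/
open MeasureTheory ProbabilityTheory
open scoped ENNReal NNReal RealInnerProductSpace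

noncomputable section

namespace Paper

variable {H : Type*}

section Defs
variable [NormedAddCommGroup H] [MeasurableSpace H]

/-- `π` is a coupling of `μ` and `ν`. -/
def IsCoupling (π : Measure (H × H)) (μ ν : Measure H) : Prop :=
  π.map Prod.fst = μ ∧ π.map Prod.snd = ν

/-- The Wasserstein-like extension of a semimetric `d` to probability measures,
`d(μ,ν) = inf over couplings π of ∫ d dπ`. -/
def wassDist (d : H → H → ℝ) (μ ν : Measure H) : ℝ :=
  sInf { r : ℝ | ∃ π : Measure (H × H), IsProbabilityMeasure π ∧ IsCoupling π μ ν ∧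
    r = ∫ p, d p.1 p.2 ∂π }

/-- `d*(u,v) = (1 + η‖u‖ + η‖v‖)^s ‖u − v‖ / ω`. -/
def dStar (η ω s : ℝ) (u v : H) : ℝ :=
  (1 + η * ‖u‖ + η * ‖v‖) ^ s * ‖u - v‖ / ω

/-- `d_s(u,v) = min(1, d*(u,v))`. -/
def dSemi (η ω s : ℝ) (u v : H) : ℝ := min 1 (dStar η ω s u v)

/-- The weighted semimetric `d̃(u,v) = [d(u,v)(2 + θV(u) + θV(v))]^{1/2}`. -/
def dTilde (d : H → H → ℝ) (V : H → ℝ) (θ : ℝ) (u v : H) : ℝ :=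
  Real.sqrt (d u v * (2 + θ * V u + θ * V v))

/-- Lipschitz seminorm of `f` with respect to a semimetric `dt`. -/
def lipSemi (dt : H → H → ℝ) (f : H → ℝ) : ℝ :=
  sSup { r : ℝ | ∃ u v : H, u ≠ v ∧ r = |f u - f v| / dt u v }

/-- Metropolis–Hastings acceptance probability `α(u,v) = min(1, exp(Ψ(u) − Ψ(v)))`. -/
def accept (Ψ : H → ℝ) (u v : H) : ℝ := min 1 (Real.exp (Ψ u - Ψ v))

/-- RCAR proposal kernel: the law of `ζ + ξ` with `ζ ~ κ(u,·)`, `ξ ~ μβ` independent. -/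
def rcarProposal (κ : Kernel H H) (μβ : Measure H) (u : H) : Measure H :=
  ((κ u).prod μβ).map (fun p : H × H => p.1 + p.2)

/-- `P` is the Metropolis–Hastings kernel with acceptance probability `a` and proposal `Q`:
`P(u,A) = ∫_A a(u,v) Q(u,dv) + δ_u(A) ∫ (1 − a(u,w)) Q(u,dw)`. -/
def IsMHKernel (P : Kernel H H) (a : H → H → ℝ) (Q : H → Measure H) : Prop :=
  ∀ (u : H) (A : Set H), MeasurableSet A →
    (P u A).toReal = (∫ v in A, a u v ∂(Q u)) +
      (A.indicator (fun _ => (1 : ℝ)) u) * ∫ w, (1 - a u w) ∂(Q u)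

/-- `P` is the RCAR-MH kernel built from potential `Ψ`, kernel `κ` and innovation `μβ`. -/
def IsRCAR (P : Kernel H H) (Ψ : H → ℝ) (κ : Kernel H H) (μβ : Measure H) : Prop :=
  IsMHKernel P (accept Ψ) (rcarProposal κ μβ)

/-- `kIter P n u = Pⁿ δ_u`, the law after `n` steps of the chain started at `u`. -/
def kIter (P : Kernel H H) : ℕ → H → Measure H
  | 0, u => Measure.dirac u
  | n + 1, u => (kIter P n u).bind (fun x => P x)

/-- `ν` is an invariant measure for `P`: `∫ P(u,A) ν(du) = ν(A)` for all Borel `A`. -/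
def IsInvariant (P : Kernel H H) (ν : Measure H) : Prop :=
  ∀ A : Set H, MeasurableSet A → ∫⁻ u, P u A ∂ν = ν A

/-- `EChain P n u g` is the expectation of `g(U_0, …, U_n)` for the Markov chain with
transition kernel `P` started at `U_0 = u`. -/
def EChain (P : Kernel H H) : (n : ℕ) → H → ((Fin (n + 1) → H) → ℝ) → ℝ
  | 0, u, g => g (fun _ => u)
  | n + 1, u, g => ∫ v, EChain P n v (fun xs => g (Fin.cons u xs)) ∂(P u)

end Defs

section Assumptions
variable [NormedAddCommGroup H] [NormedSpace ℝ H] [MeasurableSpace H]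

/-- Assumption 1(a): locally bounded from above. -/
def Assumption1a (Ψ : H → ℝ) : Prop :=
  ∀ R : ℝ, 0 < R → ∃ M₁ : ℝ, 0 ≤ M₁ ∧ ∀ u : H, ‖u‖ ≤ R → Ψ u ≤ M₁

/-- Assumption 1(b): locally bounded from below, with exponent `q ≥ 0`. -/
def Assumption1b (Ψ : H → ℝ) (q : ℝ) : Prop :=
  ∃ M₂ M₃ : ℝ, 0 ≤ M₂ ∧ 0 ≤ M₃ ∧ ∀ u : H, M₃ - M₂ * Real.log (‖u‖ ^ q) ≤ Ψ u

/-- Assumption 1(c): increasing in the tail. -/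
def Assumption1c (Ψ : H → ℝ) : Prop :=
  ∀ βt bt : ℝ, βt ∈ Set.Ioo (0 : ℝ) 1 → bt ∈ Set.Ioo (0 : ℝ) 1 →
    ∃ R₀ M₄ : ℝ, 0 < R₀ ∧ 0 < M₄ ∧
      ∀ u v : H, R₀ < ‖u‖ → ‖v - βt • u‖ ≤ bt * (1 - βt) * ‖u‖ →
        M₄ ≤ Real.exp (Ψ u - Ψ v)

/-- Assumption 1(d): locally Lipschitz with exponent `q ≥ 0`. -/
def Assumption1d (Ψ : H → ℝ) (q : ℝ) : Prop :=
  ∃ L : ℝ, 0 < L ∧ ∀ u v : H,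
    |Ψ u - Ψ v| ≤ L * max 1 (max (‖u‖ ^ q) (‖v‖ ^ q)) * ‖u - v‖

/-- Assumption 2(a): almost sure contraction. -/
def Assumption2a (κ : Kernel H H) : Prop :=
  ∀ u : H, ∀ᵐ ζ ∂(κ u), ‖ζ‖ < ‖u‖

/-- Assumption 2(b): local concentration. -/
def Assumption2b (κ : Kernel H H) : Prop :=
  ∃ β₀ b₀ ε₀ : ℝ, 0 < b₀ ∧ b₀ < β₀ ∧ β₀ < 1 ∧ 0 < ε₀ ∧
    ∀ u : H, ENNReal.ofReal ε₀ ≤ κ u {ζ : H | ‖ζ - β₀ • u‖ ≤ b₀ * (1 - β₀) * ‖u‖}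

/-- Assumption 2(c): contracting couplings. -/
def Assumption2c (κ : Kernel H H) : Prop :=
  ∃ βc : ℝ, 0 < βc ∧ βc < 1 ∧ ∀ u v : H,
    ∃ π : Measure (H × H), IsProbabilityMeasure π ∧ IsCoupling π (κ u) (κ v) ∧
      (∀ᵐ p ∂π, ‖p.1 - p.2‖ < ‖u - v‖) ∧
      (∫ p, ‖p.1 - p.2‖ ∂π) ≤ βc * ‖u - v‖

end Assumptions

end Paper

namespace Paper

/-- Proposition 2 of the paper. If `μ` has bounded moments of degree
`p ≥ 1` and `Ψ` is measurable and satisfies Assumption 1(a) and 1(b) with exponent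
`q ≤ p`, then the normalizing constant `Z = ∫ exp(−Ψ) dμ` is strictly positive and
finite, and `ν` with `dν/dμ = Z⁻¹ exp(−Ψ)` is a well-defined probability measure. -/
theorem statement0 {H : Type*} [NormedAddCommGroup H] [NormedSpace ℝ H] [CompleteSpace H]
    [SecondCountableTopology H] [MeasurableSpace H] [BorelSpace H]
    (μ : Measure H) [IsProbabilityMeasure μ]
    (p q : ℝ) (hp : 1 ≤ p) (hq : 0 ≤ q) (hqp : q ≤ p)
    (hmom : Integrable (fun u : H => ‖u‖ ^ p) μ)
    (Ψ : H → ℝ) (hΨ : Measurable Ψ)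
    (h1a : Assumption1a Ψ) (h1b : Assumption1b Ψ q) :
    0 < (∫⁻ u, ENNReal.ofReal (Real.exp (-Ψ u)) ∂μ) ∧
    (∫⁻ u, ENNReal.ofReal (Real.exp (-Ψ u)) ∂μ) < ⊤ ∧
    IsProbabilityMeasure (μ.withDensity fun u =>
      ENNReal.ofReal (Real.exp (-Ψ u)) / ∫⁻ w, ENNReal.ofReal (Real.exp (-Ψ w)) ∂μ) := by
  obtain ⟨M₂, M₃, hM₂, hM₃, h1b⟩ := h1b
  have hfm : Measurable fun u : H => ENNReal.ofReal (Real.exp (-Ψ u)) :=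
    (Real.measurable_exp.comp hΨ.neg).ennreal_ofReal
  -- pointwise lower bound Ψ ≥ M₃
  have key : ∀ u : H, M₃ ≤ Ψ u := by
    intro u
    rcases eq_or_lt_of_le hq with hq0 | hq0
    · have := h1b u
      rw [← hq0, Real.rpow_zero, Real.log_one, mul_zero, sub_zero] at this
      exact this
    rcases eq_or_lt_of_le hM₂ with hM₂0 | hM₂0
    · have := h1b u; rw [← hM₂0, zero_mul, sub_zero] at this; exact this
    rcases eq_or_ne (‖u‖) 0 with h0 | h0
    · have := h1b u
      rw [h0, Real.zero_rpow hq0.ne', Real.log_zero, mul_zero, sub_zero] at this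
      exact this
    · -- contradiction: scale u to small norm
      exfalso
      obtain ⟨M₁, hM₁0, hM₁⟩ := h1a 1 one_pos
      have hu0 : (0:ℝ) < ‖u‖ := lt_of_le_of_ne (norm_nonneg u) (Ne.symm h0)
      set c : ℝ := (M₃ - M₁ - 1) / (M₂ * q) with hc
      set ε : ℝ := min 1 (Real.exp c) with hε
      have hε0 : 0 < ε := lt_min one_pos (Real.exp_pos c)
      have hε1 : ε ≤ 1 := min_le_left _ _
      set v : H := (ε / ‖u‖) • u with hv
      have hnv : ‖v‖ = ε := by
        rw [hv, norm_smul, norm_div, Real.norm_eq_abs, Real.norm_eq_abs,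
          abs_of_pos hε0, abs_of_pos hu0, div_mul_cancel₀ _ hu0.ne']
      have h1 : Ψ v ≤ M₁ := hM₁ v (by rw [hnv]; exact hε1)
      have hlog : Real.log ε ≤ c :=
        (Real.log_le_log hε0 (min_le_right _ _)).trans_eq (Real.log_exp c)
      have hMq : 0 < M₂ * q := mul_pos hM₂0 hq0
      have h2 : M₁ + 1 ≤ Ψ v := by
        have := h1b v
        rw [hnv, Real.log_rpow hε0] at this
        have h3 : M₂ * (q * Real.log ε) ≤ M₃ - M₁ - 1 := by
          have := mul_le_mul_of_nonneg_left hlog hMq.le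
          rw [hc, mul_div_cancel₀ _ hMq.ne'] at this
          linarith [this]
        linarith
      linarith
  have hZpos : 0 < ∫⁻ u, ENNReal.ofReal (Real.exp (-Ψ u)) ∂μ := by
    rw [lintegral_pos_iff_support hfm]
    have hsupp : (Function.support fun u : H => ENNReal.ofReal (Real.exp (-Ψ u)))
        = Set.univ := by
      ext u
      simp [Function.mem_support, Real.exp_pos]
    rw [hsupp]
    simp
  have hZfin : (∫⁻ u, ENNReal.ofReal (Real.exp (-Ψ u)) ∂μ) < ⊤ := by
    calc ∫⁻ u, ENNReal.ofReal (Real.exp (-Ψ u)) ∂μ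
        ≤ ∫⁻ _, ENNReal.ofReal (Real.exp (-M₃)) ∂μ := by
          refine lintegral_mono fun u => ?_
          exact ENNReal.ofReal_le_ofReal (Real.exp_le_exp.mpr (by linarith [key u]))
      _ = ENNReal.ofReal (Real.exp (-M₃)) := by simp
      _ < ⊤ := ENNReal.ofReal_lt_top
  refine ⟨hZpos, hZfin, ⟨?_⟩⟩
  rw [withDensity_apply _ MeasurableSet.univ, setLIntegral_univ]
  simp only [div_eq_mul_inv]
  rw [lintegral_mul_const _ hfm, ENNReal.mul_inv_cancel hZpos.ne' hZfin.ne]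


end Paper
end
end

section
/- Let q ≥ 0 be an integer, p ≥ 1 an integer, V(u) = ‖u‖^p, and fix parameters θ, ω, η > 0. Then there exists a constant G(θ, q, ω, η, p) > 0 such that the weighted semimetric d̃_q satisfies the weak triangle inequality d̃_q(u,v) ≤ G·(d̃_q(u,w) + d̃_q(w,v)) for all u, v, w ∈ H. -/
open MeasureTheory ProbabilityTheory
open scoped ENNReal NNReal RealInnerProductSpace

noncomputable section

namespace Paper

lemma aux_pow_add_le (p : ℕ) {a b : ℝ} (ha : 0 ≤ a) (hb : 0 ≤ b) :
    (a + b) ^ p ≤ 2 ^ p * (a ^ p + b ^ p) := by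
  have h1 : a + b ≤ 2 * max a b := by
    rcases le_total a b with h | h
    · rw [max_eq_right h]; linarith
    · rw [max_eq_left h]; linarith
  calc (a + b) ^ p ≤ (2 * max a b) ^ p := pow_le_pow_left₀ (by linarith) h1 p
    _ = 2 ^ p * (max a b) ^ p := mul_pow 2 (max a b) p
    _ ≤ 2 ^ p * (a ^ p + b ^ p) := by
        have : (max a b) ^ p ≤ a ^ p + b ^ p := by
          rcases le_total a b with h | h
          · rw [max_eq_right h]; nlinarith [pow_nonneg ha p]
          · rw [max_eq_left h]; nlinarith [pow_nonneg hb p]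
        nlinarith [pow_nonneg (by norm_num : (0:ℝ) ≤ 2) p]

lemma aux_W_bound (p : ℕ) {θ ω x y z : ℝ} (hθ : 0 < θ) (hω : 0 < ω)
    (hy : 0 ≤ y) (hz : 0 ≤ z) (hxp : 0 ≤ x ^ p) (h : y ≤ z + ω) :
    2 + θ * x ^ p + θ * y ^ p ≤ 2 ^ p * (1 + θ * ω ^ p) * (2 + θ * x ^ p + θ * z ^ p) := by
  have h1 : y ^ p ≤ (z + ω) ^ p := pow_le_pow_left₀ hy h p
  have h2 : (z + ω) ^ p ≤ 2 ^ p * (z ^ p + ω ^ p) := aux_pow_add_le p hz hω.le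
  have h3 : (1 : ℝ) ≤ 2 ^ p := one_le_pow₀ (by norm_num)
  have hzp : 0 ≤ z ^ p := pow_nonneg hz p
  have hωp : 0 ≤ ω ^ p := pow_nonneg hω.le p
  nlinarith [mul_le_mul_of_nonneg_left h1 hθ.le, mul_le_mul_of_nonneg_left h2 hθ.le,
    mul_nonneg hθ.le hzp, mul_nonneg hθ.le hωp, mul_nonneg hθ.le hxp,
    mul_nonneg (mul_nonneg hθ.le hωp) (mul_nonneg hθ.le hxp),
    mul_nonneg (mul_nonneg hθ.le hωp) (mul_nonneg hθ.le hzp),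
    mul_nonneg (sub_nonneg.2 h3) (mul_nonneg hθ.le hxp),
    mul_nonneg (sub_nonneg.2 h3) (mul_nonneg hθ.le hzp),
    mul_nonneg (sub_nonneg.2 h3) (mul_nonneg hθ.le hωp)]

lemma aux_key {H : Type*} [NormedAddCommGroup H] (q p : ℕ) {θ ω η : ℝ}
    (hθ : 0 < θ) (hω : 0 < ω) (hη : 0 < η) (u v w : H) :
    dSemi η ω (q : ℝ) u v * (2 + θ * ‖u‖ ^ p + θ * ‖v‖ ^ p)
      ≤ ((1 + η * ω) ^ q * (2 ^ p * (1 + θ * ω ^ p))) *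
        (dSemi η ω (q : ℝ) u w * (2 + θ * ‖u‖ ^ p + θ * ‖w‖ ^ p)
          + dSemi η ω (q : ℝ) w v * (2 + θ * ‖w‖ ^ p + θ * ‖v‖ ^ p)) := by
  have hds : ∀ a b : H, dStar η ω (q : ℝ) a b = (1 + η * ‖a‖ + η * ‖b‖) ^ q * ‖a - b‖ / ω := by
    intro a b; unfold dStar; rw [Real.rpow_natCast]
  have hB : ∀ a b : H, (1 : ℝ) ≤ 1 + η * ‖a‖ + η * ‖b‖ := by
    intro a b
    nlinarith [norm_nonneg a, norm_nonneg b, mul_nonneg hη.le (norm_nonneg a),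
      mul_nonneg hη.le (norm_nonneg b)]
  have hstar_nonneg : ∀ a b : H, 0 ≤ dStar η ω (q : ℝ) a b := by
    intro a b; rw [hds]
    have := hB a b
    positivity
  have hd_nonneg : ∀ a b : H, 0 ≤ dSemi η ω (q : ℝ) a b := by
    intro a b; exact le_min (by norm_num) (hstar_nonneg a b)
  have hd_le_one : ∀ a b : H, dSemi η ω (q : ℝ) a b ≤ 1 := fun a b => min_le_left _ _
  have hnorm_le : ∀ a b : H, dStar η ω (q : ℝ) a b ≤ 1 → ‖a - b‖ ≤ ω := by
    intro a b hab
    rw [hds] at hab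
    have h1 : (1 : ℝ) ≤ (1 + η * ‖a‖ + η * ‖b‖) ^ q := one_le_pow₀ (hB a b)
    have h2 : (1 + η * ‖a‖ + η * ‖b‖) ^ q * ‖a - b‖ ≤ ω := by
      rw [div_le_one hω] at hab; exact hab
    nlinarith [norm_nonneg (a - b)]
  have hW_nonneg : ∀ a b : H, (0 : ℝ) ≤ 2 + θ * ‖a‖ ^ p + θ * ‖b‖ ^ p := by
    intro a b; positivity
  set C1 : ℝ := 2 ^ p * (1 + θ * ω ^ p) with hC1
  have hC1pos : 0 < C1 := by positivity
  have hC1one : (1 : ℝ) ≤ C1 := by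
    have h3 : (1 : ℝ) ≤ 2 ^ p := one_le_pow₀ (by norm_num)
    nlinarith [mul_nonneg hθ.le (pow_nonneg hω.le p)]
  set E : ℝ := (1 + η * ω) ^ q with hE
  have hEone : (1 : ℝ) ≤ E := one_le_pow₀ (by nlinarith)
  have hEpos : 0 < E := lt_of_lt_of_le one_pos hEone
  by_cases h1 : dStar η ω (q : ℝ) u w ≤ 1 <;> by_cases h2 : dStar η ω (q : ℝ) w v ≤ 1
  · -- both small: dSemi = dStar on both legs
    have e1 : dSemi η ω (q : ℝ) u w = dStar η ω (q : ℝ) u w := min_eq_right h1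
    have e2 : dSemi η ω (q : ℝ) w v = dStar η ω (q : ℝ) w v := min_eq_right h2
    have huw : ‖u - w‖ ≤ ω := hnorm_le u w h1
    have hwv : ‖w - v‖ ≤ ω := hnorm_le w v h2
    have hun : ‖u‖ ≤ ‖w‖ + ω := by
      have := norm_sub_norm_le u w
      linarith
    have hvn : ‖v‖ ≤ ‖w‖ + ω := by
      have h := norm_sub_norm_le v w
      have : ‖v - w‖ = ‖w - v‖ := norm_sub_rev v w
      linarith
    -- weak triangle for dStar
    have hs : dStar η ω (q : ℝ) u v ≤ E * (dStar η ω (q : ℝ) u w + dStar η ω (q : ℝ) w v) := by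
      rw [hds, hds, hds]
      have hBuv : (0:ℝ) ≤ 1 + η * ‖u‖ + η * ‖v‖ := le_trans zero_le_one (hB u v)
      have hBB1 : 1 + η * ‖u‖ + η * ‖v‖ ≤ (1 + η * ω) * (1 + η * ‖u‖ + η * ‖w‖) := by
        nlinarith [mul_le_mul_of_nonneg_left hvn hη.le, hB u w,
          mul_nonneg (mul_nonneg hη.le hω.le) (sub_nonneg.2 (hB u w))]
      have hBB2 : 1 + η * ‖u‖ + η * ‖v‖ ≤ (1 + η * ω) * (1 + η * ‖w‖ + η * ‖v‖) := by
        nlinarith [mul_le_mul_of_nonneg_left hun hη.le, hB w v,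
          mul_nonneg (mul_nonneg hη.le hω.le) (sub_nonneg.2 (hB w v))]
      have hq1 : (1 + η * ‖u‖ + η * ‖v‖) ^ q ≤ E * (1 + η * ‖u‖ + η * ‖w‖) ^ q := by
        calc (1 + η * ‖u‖ + η * ‖v‖) ^ q
            ≤ ((1 + η * ω) * (1 + η * ‖u‖ + η * ‖w‖)) ^ q := pow_le_pow_left₀ hBuv hBB1 q
          _ = E * (1 + η * ‖u‖ + η * ‖w‖) ^ q := mul_pow _ _ q
      have hq2 : (1 + η * ‖u‖ + η * ‖v‖) ^ q ≤ E * (1 + η * ‖w‖ + η * ‖v‖) ^ q := by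
        calc (1 + η * ‖u‖ + η * ‖v‖) ^ q
            ≤ ((1 + η * ω) * (1 + η * ‖w‖ + η * ‖v‖)) ^ q := pow_le_pow_left₀ hBuv hBB2 q
          _ = E * (1 + η * ‖w‖ + η * ‖v‖) ^ q := mul_pow _ _ q
      have htri : ‖u - v‖ ≤ ‖u - w‖ + ‖w - v‖ := norm_sub_le_norm_sub_add_norm_sub u w v
      have hBq : (0:ℝ) ≤ (1 + η * ‖u‖ + η * ‖v‖) ^ q := pow_nonneg hBuv q
      have hnum : (1 + η * ‖u‖ + η * ‖v‖) ^ q * ‖u - v‖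
          ≤ E * ((1 + η * ‖u‖ + η * ‖w‖) ^ q * ‖u - w‖
            + (1 + η * ‖w‖ + η * ‖v‖) ^ q * ‖w - v‖) := by
        calc (1 + η * ‖u‖ + η * ‖v‖) ^ q * ‖u - v‖
            ≤ (1 + η * ‖u‖ + η * ‖v‖) ^ q * (‖u - w‖ + ‖w - v‖) :=
              mul_le_mul_of_nonneg_left htri hBq
          _ = (1 + η * ‖u‖ + η * ‖v‖) ^ q * ‖u - w‖
              + (1 + η * ‖u‖ + η * ‖v‖) ^ q * ‖w - v‖ := by ring
          _ ≤ E * (1 + η * ‖u‖ + η * ‖w‖) ^ q * ‖u - w‖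
              + E * (1 + η * ‖w‖ + η * ‖v‖) ^ q * ‖w - v‖ :=
              add_le_add (mul_le_mul_of_nonneg_right hq1 (norm_nonneg _))
                (mul_le_mul_of_nonneg_right hq2 (norm_nonneg _))
          _ = E * ((1 + η * ‖u‖ + η * ‖w‖) ^ q * ‖u - w‖
              + (1 + η * ‖w‖ + η * ‖v‖) ^ q * ‖w - v‖) := by ring
      calc (1 + η * ‖u‖ + η * ‖v‖) ^ q * ‖u - v‖ / ω
          ≤ E * ((1 + η * ‖u‖ + η * ‖w‖) ^ q * ‖u - w‖
            + (1 + η * ‖w‖ + η * ‖v‖) ^ q * ‖w - v‖) / ω :=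
            (div_le_div_iff_of_pos_right hω).2 hnum
        _ = E * ((1 + η * ‖u‖ + η * ‖w‖) ^ q * ‖u - w‖ / ω
            + (1 + η * ‖w‖ + η * ‖v‖) ^ q * ‖w - v‖ / ω) := by ring
    have hW1 : 2 + θ * ‖u‖ ^ p + θ * ‖v‖ ^ p ≤ C1 * (2 + θ * ‖u‖ ^ p + θ * ‖w‖ ^ p) :=
      aux_W_bound p hθ hω (norm_nonneg v) (norm_nonneg w) (pow_nonneg (norm_nonneg u) p) hvn
    have hW2 : 2 + θ * ‖u‖ ^ p + θ * ‖v‖ ^ p ≤ C1 * (2 + θ * ‖w‖ ^ p + θ * ‖v‖ ^ p) := by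
      have := aux_W_bound p hθ hω (norm_nonneg u) (norm_nonneg w)
        (pow_nonneg (norm_nonneg v) p) hun
      rw [← hC1] at this
      have heq : C1 * (2 + θ * ‖v‖ ^ p + θ * ‖w‖ ^ p)
          = C1 * (2 + θ * ‖w‖ ^ p + θ * ‖v‖ ^ p) := by ring
      linarith
    calc dSemi η ω (q : ℝ) u v * (2 + θ * ‖u‖ ^ p + θ * ‖v‖ ^ p)
        ≤ dStar η ω (q : ℝ) u v * (2 + θ * ‖u‖ ^ p + θ * ‖v‖ ^ p) :=
          mul_le_mul_of_nonneg_right (min_le_right _ _) (hW_nonneg u v)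
      _ ≤ (E * (dStar η ω (q : ℝ) u w + dStar η ω (q : ℝ) w v))
            * (2 + θ * ‖u‖ ^ p + θ * ‖v‖ ^ p) :=
          mul_le_mul_of_nonneg_right hs (hW_nonneg u v)
      _ = E * (dStar η ω (q : ℝ) u w * (2 + θ * ‖u‖ ^ p + θ * ‖v‖ ^ p))
          + E * (dStar η ω (q : ℝ) w v * (2 + θ * ‖u‖ ^ p + θ * ‖v‖ ^ p)) := by ring
      _ ≤ E * (dStar η ω (q : ℝ) u w * (C1 * (2 + θ * ‖u‖ ^ p + θ * ‖w‖ ^ p)))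
          + E * (dStar η ω (q : ℝ) w v * (C1 * (2 + θ * ‖w‖ ^ p + θ * ‖v‖ ^ p))) :=
          add_le_add
            (mul_le_mul_of_nonneg_left
              (mul_le_mul_of_nonneg_left hW1 (hstar_nonneg u w)) hEpos.le)
            (mul_le_mul_of_nonneg_left
              (mul_le_mul_of_nonneg_left hW2 (hstar_nonneg w v)) hEpos.le)
      _ = (E * C1) * (dStar η ω (q : ℝ) u w * (2 + θ * ‖u‖ ^ p + θ * ‖w‖ ^ p)
          + dStar η ω (q : ℝ) w v * (2 + θ * ‖w‖ ^ p + θ * ‖v‖ ^ p)) := by ring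
      _ = (E * C1) * (dSemi η ω (q : ℝ) u w * (2 + θ * ‖u‖ ^ p + θ * ‖w‖ ^ p)
          + dSemi η ω (q : ℝ) w v * (2 + θ * ‖w‖ ^ p + θ * ‖v‖ ^ p)) := by rw [e1, e2]
  · -- dStar u w ≤ 1, dStar w v > 1
    have e2 : dSemi η ω (q : ℝ) w v = 1 := min_eq_left (le_of_not_ge h2)
    have huw : ‖u - w‖ ≤ ω := hnorm_le u w h1
    have hun : ‖u‖ ≤ ‖w‖ + ω := by
      have := norm_sub_norm_le u w; linarith
    have hW2 : 2 + θ * ‖u‖ ^ p + θ * ‖v‖ ^ p ≤ C1 * (2 + θ * ‖w‖ ^ p + θ * ‖v‖ ^ p) := by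
      have := aux_W_bound p hθ hω (norm_nonneg u) (norm_nonneg w)
        (pow_nonneg (norm_nonneg v) p) hun
      rw [← hC1] at this
      have heq : C1 * (2 + θ * ‖v‖ ^ p + θ * ‖w‖ ^ p)
          = C1 * (2 + θ * ‖w‖ ^ p + θ * ‖v‖ ^ p) := by ring
      linarith
    have hterm : 0 ≤ dSemi η ω (q : ℝ) u w * (2 + θ * ‖u‖ ^ p + θ * ‖w‖ ^ p) :=
      mul_nonneg (hd_nonneg u w) (hW_nonneg u w)
    calc dSemi η ω (q : ℝ) u v * (2 + θ * ‖u‖ ^ p + θ * ‖v‖ ^ p)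
        ≤ 1 * (2 + θ * ‖u‖ ^ p + θ * ‖v‖ ^ p) :=
          mul_le_mul_of_nonneg_right (hd_le_one u v) (hW_nonneg u v)
      _ = 2 + θ * ‖u‖ ^ p + θ * ‖v‖ ^ p := one_mul _
      _ ≤ C1 * (2 + θ * ‖w‖ ^ p + θ * ‖v‖ ^ p) := hW2
      _ ≤ (E * C1) * (dSemi η ω (q : ℝ) u w * (2 + θ * ‖u‖ ^ p + θ * ‖w‖ ^ p)
          + dSemi η ω (q : ℝ) w v * (2 + θ * ‖w‖ ^ p + θ * ‖v‖ ^ p)) := by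
          rw [e2]
          nlinarith [hW_nonneg w v, mul_nonneg hEpos.le (mul_nonneg hC1pos.le hterm),
            mul_nonneg (mul_nonneg (sub_nonneg.2 hEone) hC1pos.le) (hW_nonneg w v)]
  · -- dStar u w > 1, dStar w v ≤ 1
    have e1 : dSemi η ω (q : ℝ) u w = 1 := min_eq_left (le_of_not_ge h1)
    have hwv : ‖w - v‖ ≤ ω := hnorm_le w v h2
    have hvn : ‖v‖ ≤ ‖w‖ + ω := by
      have h := norm_sub_norm_le v w
      have : ‖v - w‖ = ‖w - v‖ := norm_sub_rev v w
      linarith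
    have hW1 : 2 + θ * ‖u‖ ^ p + θ * ‖v‖ ^ p ≤ C1 * (2 + θ * ‖u‖ ^ p + θ * ‖w‖ ^ p) :=
      aux_W_bound p hθ hω (norm_nonneg v) (norm_nonneg w) (pow_nonneg (norm_nonneg u) p) hvn
    have hterm : 0 ≤ dSemi η ω (q : ℝ) w v * (2 + θ * ‖w‖ ^ p + θ * ‖v‖ ^ p) :=
      mul_nonneg (hd_nonneg w v) (hW_nonneg w v)
    calc dSemi η ω (q : ℝ) u v * (2 + θ * ‖u‖ ^ p + θ * ‖v‖ ^ p)
        ≤ 1 * (2 + θ * ‖u‖ ^ p + θ * ‖v‖ ^ p) :=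
          mul_le_mul_of_nonneg_right (hd_le_one u v) (hW_nonneg u v)
      _ = 2 + θ * ‖u‖ ^ p + θ * ‖v‖ ^ p := one_mul _
      _ ≤ C1 * (2 + θ * ‖u‖ ^ p + θ * ‖w‖ ^ p) := hW1
      _ ≤ (E * C1) * (dSemi η ω (q : ℝ) u w * (2 + θ * ‖u‖ ^ p + θ * ‖w‖ ^ p)
          + dSemi η ω (q : ℝ) w v * (2 + θ * ‖w‖ ^ p + θ * ‖v‖ ^ p)) := by
          rw [e1]
          nlinarith [hW_nonneg u w, mul_nonneg hEpos.le (mul_nonneg hC1pos.le hterm),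
            mul_nonneg (mul_nonneg (sub_nonneg.2 hEone) hC1pos.le) (hW_nonneg u w)]
  · -- both large
    have e1 : dSemi η ω (q : ℝ) u w = 1 := min_eq_left (le_of_not_ge h1)
    have e2 : dSemi η ω (q : ℝ) w v = 1 := min_eq_left (le_of_not_ge h2)
    have hKone : (1 : ℝ) ≤ E * C1 := by nlinarith
    rw [e1, e2]
    have hθw : 0 ≤ θ * ‖w‖ ^ p := mul_nonneg hθ.le (pow_nonneg (norm_nonneg w) p)
    have hsum : 2 + θ * ‖u‖ ^ p + θ * ‖v‖ ^ p
        ≤ (1 * (2 + θ * ‖u‖ ^ p + θ * ‖w‖ ^ p) + 1 * (2 + θ * ‖w‖ ^ p + θ * ‖v‖ ^ p)) := by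
      nlinarith
    calc dSemi η ω (q : ℝ) u v * (2 + θ * ‖u‖ ^ p + θ * ‖v‖ ^ p)
        ≤ 1 * (2 + θ * ‖u‖ ^ p + θ * ‖v‖ ^ p) :=
          mul_le_mul_of_nonneg_right (hd_le_one u v) (hW_nonneg u v)
      _ = 2 + θ * ‖u‖ ^ p + θ * ‖v‖ ^ p := one_mul _
      _ ≤ 1 * (2 + θ * ‖u‖ ^ p + θ * ‖w‖ ^ p) + 1 * (2 + θ * ‖w‖ ^ p + θ * ‖v‖ ^ p) := hsum
      _ ≤ (E * C1) * (1 * (2 + θ * ‖u‖ ^ p + θ * ‖w‖ ^ p)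
            + 1 * (2 + θ * ‖w‖ ^ p + θ * ‖v‖ ^ p)) := by
          nlinarith [hW_nonneg u w, hW_nonneg w v]

/-- Lemma 12 of the paper. For integer `q ≥ 0`, integer `p ≥ 1`,
`V(u) = ‖u‖^p` and parameters `θ, ω, η > 0`, the weighted semimetric `d̃_q` satisfies a
weak triangle inequality with some constant `G > 0`. -/
theorem statement9 {H : Type*} [NormedAddCommGroup H] [NormedSpace ℝ H] [CompleteSpace H]
    [SecondCountableTopology H] [MeasurableSpace H] [BorelSpace H]
    (q p : ℕ) (hp : 1 ≤ p) (θ ω η : ℝ) (hθ : 0 < θ) (hω : 0 < ω) (hη : 0 < η) :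
    ∃ G : ℝ, 0 < G ∧
      ∀ u v w : H,
        dTilde (dSemi η ω (q : ℝ)) (fun x : H => ‖x‖ ^ p) θ u v
          ≤ G * (dTilde (dSemi η ω (q : ℝ)) (fun x : H => ‖x‖ ^ p) θ u w
              + dTilde (dSemi η ω (q : ℝ)) (fun x : H => ‖x‖ ^ p) θ w v) := by
  set K : ℝ := (1 + η * ω) ^ q * (2 ^ p * (1 + θ * ω ^ p)) with hK
  have hKpos : 0 < K := by positivity
  refine ⟨Real.sqrt K, Real.sqrt_pos.2 hKpos, fun u v w => ?_⟩
  have hd_nonneg : ∀ a b : H, 0 ≤ dSemi η ω (q : ℝ) a b := by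
    intro a b
    refine le_min (by norm_num) ?_
    unfold dStar
    have hB : (0:ℝ) ≤ 1 + η * ‖a‖ + η * ‖b‖ := by positivity
    positivity
  have hW_nonneg : ∀ a b : H, (0 : ℝ) ≤ 2 + θ * ‖a‖ ^ p + θ * ‖b‖ ^ p := by
    intro a b; positivity
  have hprod : ∀ a b : H, 0 ≤ dSemi η ω (q : ℝ) a b * (2 + θ * ‖a‖ ^ p + θ * ‖b‖ ^ p) :=
    fun a b => mul_nonneg (hd_nonneg a b) (hW_nonneg a b)
  set A : ℝ := dTilde (dSemi η ω (q : ℝ)) (fun x : H => ‖x‖ ^ p) θ u w with hA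
  set B : ℝ := dTilde (dSemi η ω (q : ℝ)) (fun x : H => ‖x‖ ^ p) θ w v with hB
  have hAnn : 0 ≤ A := Real.sqrt_nonneg _
  have hBnn : 0 ≤ B := Real.sqrt_nonneg _
  have hA2 : A ^ 2 = dSemi η ω (q : ℝ) u w * (2 + θ * ‖u‖ ^ p + θ * ‖w‖ ^ p) :=
    Real.sq_sqrt (hprod u w)
  have hB2 : B ^ 2 = dSemi η ω (q : ℝ) w v * (2 + θ * ‖w‖ ^ p + θ * ‖v‖ ^ p) :=
    Real.sq_sqrt (hprod w v)
  have hkey := aux_key q p hθ hω hη u v w (H := H)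
  have hstep : dSemi η ω (q : ℝ) u v * (2 + θ * ‖u‖ ^ p + θ * ‖v‖ ^ p)
      ≤ K * (A + B) ^ 2 := by
    have h1 : A ^ 2 + B ^ 2 ≤ (A + B) ^ 2 := by nlinarith
    calc dSemi η ω (q : ℝ) u v * (2 + θ * ‖u‖ ^ p + θ * ‖v‖ ^ p)
        ≤ K * (A ^ 2 + B ^ 2) := by rw [hA2, hB2]; exact hkey
      _ ≤ K * (A + B) ^ 2 := by nlinarith
  calc dTilde (dSemi η ω (q : ℝ)) (fun x : H => ‖x‖ ^ p) θ u v
      = Real.sqrt (dSemi η ω (q : ℝ) u v * (2 + θ * ‖u‖ ^ p + θ * ‖v‖ ^ p)) := rfl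
    _ ≤ Real.sqrt (K * (A + B) ^ 2) := Real.sqrt_le_sqrt hstep
    _ = Real.sqrt K * Real.sqrt ((A + B) ^ 2) := Real.sqrt_mul hKpos.le _
    _ = Real.sqrt K * (A + B) := by rw [Real.sqrt_sq (by linarith)]

end Paper
end
end

section
/- Let s ≥ 0 and ω, η > 0. Let u, v, ζ_u, ζ_v, ξ ∈ H with u ≠ v, ‖ζ_u‖ ≤ ‖u‖ and ‖ζ_v‖ ≤ ‖v‖, and set u* = ζ_u + ξ and v* = ζ_v + ξ. Then d*(u*, v*) / d*(u,v) ≤ (1 + 2η‖ξ‖)^s · ‖ζ_u − ζ_v‖ / ‖u − v‖. -/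
open MeasureTheory ProbabilityTheory
open scoped ENNReal NNReal RealInnerProductSpace

noncomputable section

namespace Paper

/-! The factor `1/ω` cancels, so the ratio of the two `d*` is the ratio of their weights
`A = 1 + η‖u*‖ + η‖v*‖` and `B = 1 + η‖u‖ + η‖v‖` (raised to `s`) times `‖ζu - ζv‖ / ‖u - v‖`.
By the triangle inequality `A ≤ B + 2η‖ξ‖`, and `B ≥ 1` turns this into `A ≤ (1 + 2η‖ξ‖) B`. -/

section Weight
variable {E : Type*} [SeminormedAddCommGroup E] {η : ℝ} {u v ζu ζv : E}

theorem weight_add_le_mul (hη : 0 ≤ η) (ξ : E) (hζu : ‖ζu‖ ≤ ‖u‖) (hζv : ‖ζv‖ ≤ ‖v‖) :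
    1 + η * ‖ζu + ξ‖ + η * ‖ζv + ξ‖ ≤ (1 + 2 * η * ‖ξ‖) * (1 + η * ‖u‖ + η * ‖v‖) := by
  have hu : ‖ζu + ξ‖ ≤ ‖u‖ + ‖ξ‖ := (norm_add_le _ _).trans (by gcongr)
  have hv : ‖ζv + ξ‖ ≤ ‖v‖ + ‖ξ‖ := (norm_add_le _ _).trans (by gcongr)
  have hcross : 0 ≤ 2 * η * ‖ξ‖ * (η * ‖u‖ + η * ‖v‖) := by positivity
  nlinarith

theorem weight_add_rpow_le_mul {s : ℝ} (hs : 0 ≤ s) (hη : 0 ≤ η) (ξ : E)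
    (hζu : ‖ζu‖ ≤ ‖u‖) (hζv : ‖ζv‖ ≤ ‖v‖) :
    (1 + η * ‖ζu + ξ‖ + η * ‖ζv + ξ‖) ^ s
      ≤ (1 + 2 * η * ‖ξ‖) ^ s * (1 + η * ‖u‖ + η * ‖v‖) ^ s := by
  rw [← Real.mul_rpow (by positivity) (by positivity)]
  exact Real.rpow_le_rpow (by positivity) (weight_add_le_mul hη ξ hζu hζv) hs

end Weight

theorem statement16_general {H : Type*} [NormedAddCommGroup H]
    (s ω η : ℝ) (hs : 0 ≤ s) (hω : 0 < ω) (hη : 0 < η)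
    (u v ζu ζv ξ : H) (hζu : ‖ζu‖ ≤ ‖u‖) (hζv : ‖ζv‖ ≤ ‖v‖) :
    dStar η ω s (ζu + ξ) (ζv + ξ) / dStar η ω s u v
      ≤ (1 + 2 * η * ‖ξ‖) ^ s * ‖ζu - ζv‖ / ‖u - v‖ := by
  have hweight : 0 < (1 + η * ‖u‖ + η * ‖v‖) ^ s := by positivity
  rw [dStar, dStar, div_div_div_cancel_right₀ hω.ne', add_sub_add_right_eq_sub,
    mul_div_mul_comm, mul_div_assoc]
  gcongr
  rw [div_le_iff₀ hweight]
  exact weight_add_rpow_le_mul hs hη.le ξ hζu hζv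

/-- Lemma 20(b) of the paper. If `‖ζ_u‖ ≤ ‖u‖`, `‖ζ_v‖ ≤ ‖v‖` and
`u* = ζ_u + ξ`, `v* = ζ_v + ξ`, then
`d*(u*, v*)/d*(u,v) ≤ (1 + 2η‖ξ‖)^s ‖ζ_u − ζ_v‖ / ‖u − v‖`. -/
theorem statement16 {H : Type*} [NormedAddCommGroup H] [NormedSpace ℝ H] [CompleteSpace H]
    [SecondCountableTopology H] [MeasurableSpace H] [BorelSpace H]
    (s ω η : ℝ) (hs : 0 ≤ s) (hω : 0 < ω) (hη : 0 < η)
    (u v ζu ζv ξ : H) (huv : u ≠ v) (hζu : ‖ζu‖ ≤ ‖u‖) (hζv : ‖ζv‖ ≤ ‖v‖) :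
    dStar η ω s (ζu + ξ) (ζv + ξ) / dStar η ω s u v
      ≤ (1 + 2 * η * ‖ξ‖) ^ s * ‖ζu - ζv‖ / ‖u - v‖ :=
  statement16_general s ω η hs hω hη u v ζu ζv ξ hζu hζv

end Paper
end
end

section
/- Let s ≥ 0 and ω, η > 0. Then the semimetric d_s satisfies the weak triangle inequality with explicit constant (1 + ηω)^s: for all u, v, w ∈ H, d_s(u,v) ≤ (1 + ηω)^s · (d_s(u,w) + d_s(w,v)). -/
open MeasureTheory ProbabilityTheory
open scoped ENNReal NNReal RealInnerProductSpace

noncomputable section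

namespace Paper

/-- weak triangle inequality for `d_s`, from the proof of Lemma 12.
For all `u, v, w`, `d_s(u,v) ≤ (1 + ηω)^s (d_s(u,w) + d_s(w,v))`. -/
theorem statement17 {H : Type*} [NormedAddCommGroup H] [NormedSpace ℝ H] [CompleteSpace H]
    [SecondCountableTopology H] [MeasurableSpace H] [BorelSpace H]
    (s ω η : ℝ) (hs : 0 ≤ s) (hω : 0 < ω) (hη : 0 < η) (u v w : H) :
    dSemi η ω s u v ≤ (1 + η * ω) ^ s * (dSemi η ω s u w + dSemi η ω s w v) := by
  have hC : (1:ℝ) ≤ (1 + η * ω) ^ s := Real.one_le_rpow (by nlinarith) hs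
  have hbase : ∀ a b : H, (1:ℝ) ≤ 1 + η * ‖a‖ + η * ‖b‖ := by
    intro a b
    have := norm_nonneg a; have := norm_nonneg b; nlinarith
  have hbs : ∀ a b : H, (1:ℝ) ≤ (1 + η * ‖a‖ + η * ‖b‖) ^ s :=
    fun a b => Real.one_le_rpow (hbase a b) hs
  have hds_nonneg : ∀ a b : H, 0 ≤ dStar η ω s a b := by
    intro a b
    exact div_nonneg (mul_nonneg (by linarith [hbs a b]) (norm_nonneg _)) hω.le
  have hd_nonneg : ∀ a b : H, 0 ≤ dSemi η ω s a b :=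
    fun a b => le_min zero_le_one (hds_nonneg a b)
  have hd_le_one : dSemi η ω s u v ≤ 1 := min_le_left _ _
  by_cases h1 : 1 ≤ dStar η ω s u w
  · have e1 : dSemi η ω s u w = 1 := min_eq_left h1
    calc dSemi η ω s u v ≤ 1 := hd_le_one
      _ ≤ (1 + η * ω) ^ s * (dSemi η ω s u w + dSemi η ω s w v) := by
        rw [e1]; nlinarith [hd_nonneg w v]
  by_cases h2 : 1 ≤ dStar η ω s w v
  · have e2 : dSemi η ω s w v = 1 := min_eq_left h2
    calc dSemi η ω s u v ≤ 1 := hd_le_one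
      _ ≤ (1 + η * ω) ^ s * (dSemi η ω s u w + dSemi η ω s w v) := by
        rw [e2]; nlinarith [hd_nonneg u w]
  push_neg at h1 h2
  have e1 : dSemi η ω s u w = dStar η ω s u w := min_eq_right h1.le
  have e2 : dSemi η ω s w v = dStar η ω s w v := min_eq_right h2.le
  -- ‖u - w‖ ≤ ω and ‖w - v‖ ≤ ω
  have huw : ‖u - w‖ ≤ ω := by
    have h := (div_lt_one hω).mp h1
    nlinarith [hbs u w, norm_nonneg (u - w)]
  have hwv : ‖w - v‖ ≤ ω := by
    have h := (div_lt_one hω).mp h2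
    nlinarith [hbs w v, norm_nonneg (w - v)]
  have hvw : ‖v‖ ≤ ‖w‖ + ω := by
    have := norm_sub_norm_le v w
    have : ‖v - w‖ ≤ ω := by rwa [norm_sub_rev]
    linarith [norm_sub_norm_le v w]
  have huw' : ‖u‖ ≤ ‖w‖ + ω := by linarith [norm_sub_norm_le u w]
  set A := 1 + η * ‖u‖ + η * ‖v‖ with hA
  set B1 := 1 + η * ‖u‖ + η * ‖w‖ with hB1
  set B2 := 1 + η * ‖w‖ + η * ‖v‖ with hB2
  have hAB1 : A ≤ (1 + η * ω) * B1 := by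
    rw [hA, hB1]
    nlinarith [mul_le_mul_of_nonneg_left hvw hη.le,
      mul_nonneg (mul_nonneg (mul_nonneg hη.le hη.le) hω.le) (norm_nonneg u),
      mul_nonneg (mul_nonneg (mul_nonneg hη.le hη.le) hω.le) (norm_nonneg w)]
  have hAB2 : A ≤ (1 + η * ω) * B2 := by
    rw [hA, hB2]
    nlinarith [mul_le_mul_of_nonneg_left huw' hη.le,
      mul_nonneg (mul_nonneg (mul_nonneg hη.le hη.le) hω.le) (norm_nonneg v),
      mul_nonneg (mul_nonneg (mul_nonneg hη.le hη.le) hω.le) (norm_nonneg w)]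
  have hA0 : (0:ℝ) ≤ A := by linarith [hbase u v]
  have hrw1 : A ^ s ≤ (1 + η * ω) ^ s * B1 ^ s := by
    rw [← Real.mul_rpow (by nlinarith) (by linarith [hbase u w])]
    exact Real.rpow_le_rpow hA0 hAB1 hs
  have hrw2 : A ^ s ≤ (1 + η * ω) ^ s * B2 ^ s := by
    rw [← Real.mul_rpow (by nlinarith) (by linarith [hbase w v])]
    exact Real.rpow_le_rpow hA0 hAB2 hs
  have htri : ‖u - v‖ ≤ ‖u - w‖ + ‖w - v‖ := norm_sub_le_norm_sub_add_norm_sub u w v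
  have key : A ^ s * ‖u - v‖ ≤
      (1 + η * ω) ^ s * (B1 ^ s * ‖u - w‖) + (1 + η * ω) ^ s * (B2 ^ s * ‖w - v‖) := by
    have hAs : (0:ℝ) ≤ A ^ s := by linarith [hbs u v]
    calc A ^ s * ‖u - v‖ ≤ A ^ s * (‖u - w‖ + ‖w - v‖) := by
          exact mul_le_mul_of_nonneg_left htri hAs
      _ = A ^ s * ‖u - w‖ + A ^ s * ‖w - v‖ := by ring
      _ ≤ (1 + η * ω) ^ s * (B1 ^ s * ‖u - w‖) + (1 + η * ω) ^ s * (B2 ^ s * ‖w - v‖) := by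
          have := mul_le_mul_of_nonneg_right hrw1 (norm_nonneg (u - w))
          have := mul_le_mul_of_nonneg_right hrw2 (norm_nonneg (w - v))
          nlinarith [norm_nonneg (u - w), norm_nonneg (w - v)]
  calc dSemi η ω s u v ≤ dStar η ω s u v := min_le_right _ _
    _ ≤ (1 + η * ω) ^ s * (dStar η ω s u w + dStar η ω s w v) := by
        unfold dStar
        rw [← hA, ← hB1, ← hB2]
        have : ((1 + η * ω) ^ s * (B1 ^ s * ‖u - w‖) + (1 + η * ω) ^ s * (B2 ^ s * ‖w - v‖)) / ω
            = (1 + η * ω) ^ s * (B1 ^ s * ‖u - w‖ / ω + B2 ^ s * ‖w - v‖ / ω) := by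
          field_simp
        rw [← this]
        gcongr
    _ = (1 + η * ω) ^ s * (dSemi η ω s u w + dSemi η ω s w v) := by rw [e1, e2]

end Paper
end
end
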